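/- Let k > 0, H*_ε = [[0,1],[-1,-2]], and let P ≻ 0 solve H*_εᵀP + P H*_ε = -2I. Let ε : [0,∞) → ℝ² solve ε̇ = k H*_ε ε + w(t) with ‖w(t)‖ ≤ W̄ for all t. Then ‖ε(t)‖ ≤ (λ_max(P)/λ_min(P)) e^{-(k/λ_max(P)) t} ‖ε(0)‖ + (1/k)(λ_max(P)/λ_min(P))² W̄. -/

import Mathlib

/-!
The quadratic form `V = ⟪P ε, ε⟫` is a Lyapunov function: by the Lyapunov equation
`V' = -2k‖ε‖² + 2⟪P ε, w⟫`, and with `λ_min ‖ε‖² ≤ V ≤ λ_max ‖ε‖²` and the Cauchy–Schwarz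
inequality for the form `P` this gives `V' ≤ -2(k/λ_max) V + 2 √λ_max W̄ √V`. Comparing `√V` with
the solution of the corresponding linear equation yields
`‖ε t‖ ≤ √(λ_max/λ_min) (e^{-(k/λ_max) t} ‖ε 0‖ + λ_max W̄ / k)`. This implies the stated bound
because `λ_max / λ_min ≥ 1` and, for this particular `H*_ε`, `λ_min ≤ P₁₁ = 1`.
-/

open Matrix Real Set
open scoped RealInnerProductSpace

theorem LinearMap.IsPositive.inner_map_le_sqrt_mul_sqrt {E : Type*} [NormedAddCommGroup E]
    [InnerProductSpace ℝ E] {P : E →ₗ[ℝ] E} (hP : P.IsPositive) (x y : E) :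
    ⟪P x, y⟫ ≤ √⟪P x, x⟫ * √⟪P y, y⟫ := by
  have hsymm : ⟪P y, x⟫ = ⟪P x, y⟫ := by rw [hP.isSymmetric y x, real_inner_comm]
  have hdiscrim : discrim ⟪P y, y⟫ (2 * ⟪P x, y⟫) ⟪P x, x⟫ ≤ 0 := by
    refine discrim_le_zero fun s => ?_
    have := hP.inner_nonneg_left (x + s • y)
    simp only [map_add, map_smul, inner_add_left, inner_add_right, real_inner_smul_left,
      real_inner_smul_right, hsymm] at this
    linarith
  rw [← sqrt_mul (hP.inner_nonneg_left x)]
  apply le_sqrt_of_sq_le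
  rw [discrim] at hdiscrim
  nlinarith

theorem le_mul_exp_add_div_of_hasDerivAt_le {f f' : ℝ → ℝ} {a b t : ℝ} (ha : 0 < a) (hb : 0 ≤ b)
    (ht : 0 ≤ t) (hf : ∀ τ ∈ Icc 0 t, HasDerivAt f (f' τ) τ)
    (bound : ∀ τ ∈ Ico 0 t, f' τ ≤ -a * f τ + b) :
    f t ≤ f 0 * exp (-a * t) + b / a := by
  have hgronwall := le_gronwallBound_of_liminf_deriv_right_le
    (fun τ hτ => (hf τ hτ).continuousAt.continuousWithinAt)
    (fun τ hτ _ hr => (hf τ (Ico_subset_Icc_self hτ)).hasDerivWithinAt.liminf_right_slope_le hr)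
    le_rfl bound t ⟨ht, le_rfl⟩
  rw [gronwallBound_of_K_ne_0 (neg_ne_zero.2 ha.ne'), sub_zero] at hgronwall
  calc f t ≤ f 0 * exp (-a * t) + b / -a * (exp (-a * t) - 1) := hgronwall
    _ = f 0 * exp (-a * t) + b / a - b / a * exp (-a * t) := by ring
    _ ≤ f 0 * exp (-a * t) + b / a := by
      have : 0 ≤ b / a * exp (-a * t) := by positivity
      linarith

theorem sqrt_le_of_hasDerivAt_le {V V' : ℝ → ℝ} {a c t : ℝ} (ha : 0 < a) (hc : 0 ≤ c)
    (ht : 0 ≤ t) (hV : ∀ τ ∈ Icc 0 t, HasDerivAt V (V' τ) τ) (hV_nonneg : ∀ τ ∈ Icc 0 t, 0 ≤ V τ)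
    (bound : ∀ τ ∈ Icc 0 t, V' τ ≤ -2 * a * V τ + 2 * c * √(V τ)) :
    √(V t) ≤ √(V 0) * exp (-a * t) + c / a := by
  have hexp : exp (-a * t) ≤ 1 := exp_le_one_iff.2 (by nlinarith)
  refine le_of_forall_pos_le_add fun δ hδ => ?_
  -- `√V` need not be differentiable where `V = 0`, so we work with `√(V + η)` for small `η > 0`.
  set η := (δ / 2) ^ 2
  have hη : 0 < η := by positivity
  have hsqrtη : √η = δ / 2 := sqrt_sq (by positivity)
  have hpos : ∀ τ ∈ Icc 0 t, 0 < V τ + η := fun τ hτ => by linarith [hV_nonneg τ hτ]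
  have hregular := le_mul_exp_add_div_of_hasDerivAt_le (f := fun τ => √(V τ + η))
    (f' := fun τ => V' τ / (2 * √(V τ + η))) ha (b := c + a * √η) (by positivity) ht
    (fun τ hτ => ((hV τ hτ).add_const η).sqrt (hpos τ hτ).ne') ?_
  · have h1 : √(V t) ≤ √(V t + η) := sqrt_le_sqrt (by linarith)
    have h2 : √(V 0 + η) ≤ √(V 0) + √η := by
      have hV0 := hV_nonneg 0 ⟨le_rfl, ht⟩
      refine sqrt_le_iff.2 ⟨by positivity, ?_⟩
      nlinarith [sq_sqrt hV0, sq_sqrt hη.le, mul_nonneg (sqrt_nonneg (V 0)) (sqrt_nonneg η)]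
    have h3 : (c + a * √η) / a = c / a + √η := by field_simp
    simp only [h3] at hregular
    nlinarith [exp_pos (-a * t)]
  · intro τ hτ
    have hτ' := Ico_subset_Icc_self hτ
    have hVτ := hV_nonneg τ hτ'
    set s := √(V τ + η)
    have hs : 0 < s := sqrt_pos.2 (hpos τ hτ')
    have hs2 : s ^ 2 = V τ + η := sq_sqrt (hpos τ hτ').le
    have hsV : √(V τ) ≤ s := sqrt_le_sqrt (by linarith)
    have hsη : √η ≤ s := sqrt_le_sqrt (by linarith)
    have hη2 : √η ^ 2 = η := sq_sqrt hη.le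
    rw [div_le_iff₀ (by positivity)]
    -- `V' ≤ -2a(s² - η) + 2c√V`, where `√V ≤ s` and `η ≤ √η s`
    nlinarith [bound τ hτ', mul_le_mul_of_nonneg_left hsV hc,
      mul_le_mul_of_nonneg_left hsη (mul_nonneg ha.le (sqrt_nonneg η))]

section QuadraticLyapunov

variable {E : Type*} [NormedAddCommGroup E] [InnerProductSpace ℝ E] {P A : E →L[ℝ] E}

theorem hasDerivAt_inner_map_self (hP : (P : E →ₗ[ℝ] E).IsSymmetric) {ε : ℝ → E} {ε' : E}
    {t : ℝ} (h : HasDerivAt ε ε' t) :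
    HasDerivAt (fun τ => ⟪P (ε τ), ε τ⟫) (2 * ⟪P (ε t), ε'⟫) t := by
  refine ((P.hasFDerivAt.comp_hasDerivAt t h).inner ℝ h).congr_deriv ?_
  have hsymm : ⟪P ε', ε t⟫ = ⟪ε', P (ε t)⟫ := hP ε' (ε t)
  rw [Function.comp_apply, hsymm, real_inner_comm (P (ε t)) ε', two_mul]

theorem two_inner_map_add_le_of_lyapunov {M k : ℝ} (hP : P.IsPositive) (hM : 0 < M) (hk : 0 ≤ k)
    (hPM : ∀ x, ⟪P x, x⟫ ≤ M * ‖x‖ ^ 2) (hLyap : ∀ x, ⟪P (A x), x⟫ = -‖x‖ ^ 2) (x w : E) :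
    2 * ⟪P x, k • A x + w⟫ ≤ -2 * (k / M) * ⟪P x, x⟫ + 2 * (√M * ‖w‖) * √⟪P x, x⟫ := by
  have hdecay : k * ⟪P x, A x⟫ ≤ -(k / M) * ⟪P x, x⟫ := by
    rw [real_inner_comm, ← hP.inner_left_eq_inner_right, hLyap]
    have := mul_le_mul_of_nonneg_left (hPM x) (div_nonneg hk hM.le)
    rw [← mul_assoc, div_mul_cancel₀ k hM.ne'] at this
    linarith
  have hdisturbance : ⟪P x, w⟫ ≤ √M * ‖w‖ * √⟪P x, x⟫ := by
    have hw : √⟪P w, w⟫ ≤ √M * ‖w‖ := by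
      rw [← sqrt_sq (norm_nonneg w), ← sqrt_mul hM.le]
      exact sqrt_le_sqrt (hPM w)
    calc ⟪P x, w⟫ ≤ √⟪P x, x⟫ * √⟪P w, w⟫ := hP.toLinearMap.inner_map_le_sqrt_mul_sqrt x w
      _ ≤ √⟪P x, x⟫ * (√M * ‖w‖) := by gcongr
      _ = √M * ‖w‖ * √⟪P x, x⟫ := mul_comm _ _
  rw [inner_add_right, real_inner_smul_right]
  linarith

theorem norm_le_of_quadratic_lyapunov {m M k W : ℝ} (hP : P.IsPositive) (hm : 0 < m) (hM : 0 < M)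
    (hPm : ∀ x, m * ‖x‖ ^ 2 ≤ ⟪P x, x⟫) (hPM : ∀ x, ⟪P x, x⟫ ≤ M * ‖x‖ ^ 2)
    (hLyap : ∀ x, ⟪P (A x), x⟫ = -‖x‖ ^ 2) (hk : 0 < k) {w ε : ℝ → E}
    (hw : ∀ t ≥ 0, ‖w t‖ ≤ W) (hε : ∀ t ≥ 0, HasDerivAt ε (k • A (ε t) + w t) t)
    {t : ℝ} (ht : 0 ≤ t) :
    ‖ε t‖ ≤ √(M / m) * (exp (-(k / M) * t) * ‖ε 0‖ + M * W / k) := by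
  have hW : 0 ≤ W := (norm_nonneg _).trans (hw 0 le_rfl)
  have hV := sqrt_le_of_hasDerivAt_le (V := fun τ => ⟪P (ε τ), ε τ⟫) (div_pos hk hM)
    (mul_nonneg (sqrt_nonneg M) hW) ht
    (fun τ hτ => hasDerivAt_inner_map_self hP.isSymmetric (hε τ hτ.1))
    (fun τ _ => hP.inner_nonneg_left (ε τ)) fun τ hτ => ?_
  · have hlower : √m * ‖ε t‖ ≤ √⟪P (ε t), ε t⟫ := by
      rw [← sqrt_sq (norm_nonneg (ε t)), ← sqrt_mul hm.le]
      exact sqrt_le_sqrt (hPm (ε t))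
    have hupper : √⟪P (ε 0), ε 0⟫ ≤ √M * ‖ε 0‖ := by
      rw [← sqrt_sq (norm_nonneg (ε 0)), ← sqrt_mul hM.le]
      exact sqrt_le_sqrt (hPM (ε 0))
    have hsqrtm : 0 < √m := sqrt_pos.2 hm
    rw [sqrt_div hM.le, div_mul_eq_mul_div, le_div_iff₀ hsqrtm]
    calc ‖ε t‖ * √m ≤ √M * ‖ε 0‖ * exp (-(k / M) * t) + √M * W / (k / M) := by
          nlinarith [exp_pos (-(k / M) * t)]
      _ = √M * (exp (-(k / M) * t) * ‖ε 0‖ + M * W / k) := by field_simp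
  · refine (two_inner_map_add_le_of_lyapunov hP hM hk.le hPM hLyap _ _).trans ?_
    gcongr
    exact hw τ hτ.1

end QuadraticLyapunov

namespace Matrix

variable {n : Type*} [Fintype n] [DecidableEq n]

theorem IsHermitian.inner_toEuclideanCLM_left {P : Matrix n n ℝ} (hP : P.IsHermitian)
    (x y : EuclideanSpace ℝ n) :
    ⟪toEuclideanCLM (𝕜 := ℝ) P x, y⟫ = ⟪x, toEuclideanCLM (𝕜 := ℝ) P y⟫ :=
  isSymmetric_toEuclideanLin_iff.2 hP x y

theorem IsHermitian.inner_toEuclideanCLM_self_eq_sum {P : Matrix n n ℝ} (hP : P.IsHermitian)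
    (x : EuclideanSpace ℝ n) :
    ⟪toEuclideanCLM (𝕜 := ℝ) P x, x⟫ =
      ∑ i, hP.eigenvalues i * ⟪hP.eigenvectorBasis i, x⟫ ^ 2 := by
  rw [← hP.eigenvectorBasis.sum_inner_mul_inner]
  refine Finset.sum_congr rfl fun i _ => ?_
  have heig : toEuclideanCLM (𝕜 := ℝ) P (hP.eigenvectorBasis i) =
      hP.eigenvalues i • hP.eigenvectorBasis i := by
    ext1
    simp [hP.mulVec_eigenvectorBasis]
  rw [hP.inner_toEuclideanCLM_left, heig, real_inner_smul_right, real_inner_comm x]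
  ring

theorem IsHermitian.iInf_eigenvalues_mul_norm_sq_le {P : Matrix n n ℝ} (hP : P.IsHermitian)
    (x : EuclideanSpace ℝ n) :
    (⨅ i, hP.eigenvalues i) * ‖x‖ ^ 2 ≤ ⟪toEuclideanCLM (𝕜 := ℝ) P x, x⟫ := by
  rw [hP.inner_toEuclideanCLM_self_eq_sum, ← hP.eigenvectorBasis.sum_sq_inner_right,
    Finset.mul_sum]
  gcongr with i
  exact ciInf_le (Set.finite_range _).bddBelow i

theorem IsHermitian.inner_toEuclideanCLM_self_le {P : Matrix n n ℝ} (hP : P.IsHermitian)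
    (x : EuclideanSpace ℝ n) :
    ⟪toEuclideanCLM (𝕜 := ℝ) P x, x⟫ ≤ (⨆ i, hP.eigenvalues i) * ‖x‖ ^ 2 := by
  rw [hP.inner_toEuclideanCLM_self_eq_sum, ← hP.eigenvectorBasis.sum_sq_inner_right,
    Finset.mul_sum]
  gcongr with i
  exact le_ciSup (Set.finite_range _).bddAbove i

theorem IsHermitian.iInf_eigenvalues_le_diag {P : Matrix n n ℝ} (hP : P.IsHermitian) (j : n) :
    (⨅ i, hP.eigenvalues i) ≤ P j j := by
  have := hP.iInf_eigenvalues_mul_norm_sq_le (EuclideanSpace.single j 1)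
  rw [real_inner_comm, inner_toEuclideanCLM] at this
  simpa using this

theorem inner_toEuclideanCLM_mul_self_of_lyapunov {A P : Matrix n n ℝ} (hP : P.IsHermitian)
    (hLyap : Aᵀ * P + P * A = -((2 : ℝ) • (1 : Matrix n n ℝ))) (x : EuclideanSpace ℝ n) :
    ⟪toEuclideanCLM (𝕜 := ℝ) P (toEuclideanCLM (𝕜 := ℝ) A x), x⟫ = -‖x‖ ^ 2 := by
  have h := congr(⟪toEuclideanCLM (𝕜 := ℝ) $hLyap x, x⟫)
  rw [← conjTranspose_eq_transpose_of_trivial, ← star_eq_conjTranspose] at h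
  simp only [map_add, map_mul, map_neg, map_smul, map_one, map_star] at h
  simp only [_root_.add_apply, mul_apply_eq_comp, _root_.neg_apply, _root_.smul_apply,
    one_apply_eq_self, ContinuousLinearMap.star_eq_adjoint, ContinuousLinearMap.adjoint_inner_left,
    inner_add_left, inner_neg_left, real_inner_smul_left, real_inner_self_eq_norm_sq] at h
  rw [hP.inner_toEuclideanCLM_left, real_inner_comm] at h
  linarith

theorem PosSemidef.isPositive_toEuclideanCLM {P : Matrix n n ℝ} (hP : P.PosSemidef) :
    (toEuclideanCLM (𝕜 := ℝ) P).IsPositive := by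
  rw [← ContinuousLinearMap.isPositive_toLinearMap_iff, coe_toEuclideanCLM_eq_toEuclideanLin]
  exact isPositive_toEuclideanLin_iff.2 hP

end Matrix

theorem lyapunov_companion_apply_one_one {P : Matrix (Fin 2) (Fin 2) ℝ}
    (hLyap : (!![0, 1; -1, -2] : Matrix (Fin 2) (Fin 2) ℝ)ᵀ * P + P * !![0, 1; -1, -2] =
      -((2 : ℝ) • (1 : Matrix (Fin 2) (Fin 2) ℝ))) :
    P 1 1 = 1 := by
  have h00 := congrFun (congrFun hLyap 0) 0
  have h11 := congrFun (congrFun hLyap 1) 1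
  simp [Matrix.mul_apply, Fin.sum_univ_two] at h00 h11
  linarith

theorem sqrt_div_mul_add_le {m M a b : ℝ} (hm : 0 < m) (hm1 : m ≤ 1) (hmM : m ≤ M) (ha : 0 ≤ a)
    (hb : 0 ≤ b) : √(M / m) * (a + M * b) ≤ M / m * a + (M / m) ^ 2 * b := by
  have hq : 1 ≤ M / m := (one_le_div hm).2 hmM
  have hsqrt : √(M / m) ≤ M / m := sqrt_le_self_iff.2 (Or.inr hq)
  have hM : M ≤ M / m := le_div_self (hm.le.trans hmM) hm hm1
  have hM0 : 0 ≤ M := hm.le.trans hmM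
  calc √(M / m) * (a + M * b) ≤ M / m * (a + M * b) := by gcongr
    _ ≤ M / m * (a + M / m * b) := by gcongr
    _ = M / m * a + (M / m) ^ 2 * b := by ring

theorem stmt12 (k : ℝ) (hk : 0 < k)
    (Hstar : Matrix (Fin 2) (Fin 2) ℝ) (hHs : Hstar = !![0, 1; -1, -2])
    (P : Matrix (Fin 2) (Fin 2) ℝ) (hP : P.IsHermitian) (hPd : P.PosDef)
    (hLyap : Hstarᵀ * P + P * Hstar = -((2 : ℝ) • (1 : Matrix (Fin 2) (Fin 2) ℝ)))
    (w : ℝ → EuclideanSpace ℝ (Fin 2)) (W : ℝ) (hw : ∀ t ≥ (0 : ℝ), ‖w t‖ ≤ W)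
    (ε : ℝ → EuclideanSpace ℝ (Fin 2))
    (hε : ∀ t ≥ (0 : ℝ), HasDerivAt ε
      (k • (show EuclideanSpace ℝ (Fin 2) from WithLp.toLp 2 (Hstar.mulVec (ε t))) + w t) t) :
    ∀ t ≥ (0 : ℝ),
      ‖ε t‖ ≤ ((⨆ i, hP.eigenvalues i) / (⨅ i, hP.eigenvalues i)) *
          Real.exp (-(k / (⨆ i, hP.eigenvalues i)) * t) * ‖ε 0‖ +
        (1 / k) * ((⨆ i, hP.eigenvalues i) / (⨅ i, hP.eigenvalues i)) ^ 2 * W := by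
  intro t ht
  set m := ⨅ i, hP.eigenvalues i
  set M := ⨆ i, hP.eigenvalues i
  have hm : 0 < m := by
    obtain ⟨i, hi⟩ := exists_eq_ciInf_of_finite (f := hP.eigenvalues)
    exact (hPd.eigenvalues_pos i).trans_eq hi
  have hm1 : m ≤ 1 :=
    (hP.iInf_eigenvalues_le_diag 1).trans_eq (lyapunov_companion_apply_one_one (hHs ▸ hLyap))
  have hmM : m ≤ M := ciInf_le_ciSup (Set.finite_range _).bddBelow (Set.finite_range _).bddAbove
  have hW : 0 ≤ W := (norm_nonneg _).trans (hw 0 le_rfl)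
  have hbound := norm_le_of_quadratic_lyapunov hPd.posSemidef.isPositive_toEuclideanCLM hm
    (hm.trans_le hmM) hP.iInf_eigenvalues_mul_norm_sq_le hP.inner_toEuclideanCLM_self_le
    (inner_toEuclideanCLM_mul_self_of_lyapunov hP hLyap) hk hw hε ht
  rw [mul_div_assoc] at hbound
  calc ‖ε t‖ ≤ √(M / m) * (exp (-(k / M) * t) * ‖ε 0‖ + M * (W / k)) := hbound
    _ ≤ M / m * (exp (-(k / M) * t) * ‖ε 0‖) + (M / m) ^ 2 * (W / k) :=
      sqrt_div_mul_add_le hm hm1 hmM (by positivity) (by positivity)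
    _ = _ := by ring
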